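/- arXiv:2207.00602 — 4 statements merged into one kernel-verified Lean document; each statement's English description precedes it below -/
import Mathlib

section
/- Let α > 0 and let d ≥ 1 be an integer. Suppose (p_x)_{x∈ℕ} is a sequence with p_x ∈ [0,1] for all x, satisfying p₁ = (1+αd)·p₀ and the recursion p_{x+2} = (1+α(x+d+1))·( p_{x+1} − (α(x+1)/(1+α(x+1)))·p_x ) for all x ≥ 0. Then p_x = 0 for all x ∈ ℕ. -/
/-!
Put `t = α(x+1)` and `D_x = (1+t) p_{x+1} - (1+t+αd) p_x`. The recursion gives
`p_{x+2} - (1+αd) p_{x+1} = t D_x / (1+t)`, and `D_0 = α²d p₀ ≥ 0`; since `p ≥ 0` the sign of `D`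
propagates, so `p_{x+2} ≥ (1+αd) p_{x+1}` for every `x`. A bounded sequence growing
geometrically with ratio `1+αd > 1` must start at `0`, so `p₁ = 0`, hence `p₀ = 0`, and the
recursion then kills every term.
-/

open Filter

theorem nonpos_of_geom_le_of_bddAbove {v : ℕ → ℝ} {c C : ℝ} (hc : 1 < c)
    (hv : ∀ n, c * v n ≤ v (n + 1)) (hC : ∀ n, v n ≤ C) : v 0 ≤ 0 := by
  by_contra! h₀
  obtain ⟨n, hn⟩ := ((tendsto_atTop_of_geom_le h₀ hc hv).eventually_gt_atTop C).exists
  exact (hC n).not_gt hn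

def SolvesRecursion (α d : ℝ) (p : ℕ → ℝ) : Prop :=
  ∀ x : ℕ, p (x + 2) =
    (1 + α * ((x : ℝ) + d + 1)) * (p (x + 1) - (α * ((x : ℝ) + 1) / (1 + α * ((x : ℝ) + 1))) * p x)

namespace SolvesRecursion

variable {α d : ℝ} {p : ℕ → ℝ}

theorem sub_eq_mul_gap (hp : SolvesRecursion α d p) (hα : 0 ≤ α) (x : ℕ) :
    p (x + 2) - (1 + α * d) * p (x + 1) =
      α * (x + 1) / (1 + α * (x + 1)) *
        ((1 + α * (x + 1)) * p (x + 1) - (1 + α * (x + 1) + α * d) * p x) := by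
  have : 1 + α * ((x : ℝ) + 1) ≠ 0 := by positivity
  rw [hp x]
  field_simp
  ring

theorem mul_le_of_gap_nonneg (hp : SolvesRecursion α d p) (hα : 0 ≤ α) (x : ℕ)
    (hgap : (1 + α * (x + 1) + α * d) * p x ≤ (1 + α * (x + 1)) * p (x + 1)) :
    (1 + α * d) * p (x + 1) ≤ p (x + 2) := by
  rw [← sub_nonneg, hp.sub_eq_mul_gap hα]
  exact mul_nonneg (by positivity) (sub_nonneg.2 hgap)

theorem gap_nonneg (hp : SolvesRecursion α d p) (hα : 0 ≤ α) (hd : 0 ≤ d)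
    (h1 : p 1 = (1 + α * d) * p 0) (hpos : ∀ x, 0 ≤ p x) (x : ℕ) :
    (1 + α * (x + 1) + α * d) * p x ≤ (1 + α * (x + 1)) * p (x + 1) := by
  have hαd : 0 ≤ α * d := mul_nonneg hα hd
  induction x with
  | zero =>
    rw [h1]
    nlinarith [mul_nonneg (mul_nonneg hα hαd) (hpos 0)]
  | succ x ih =>
    have hgrowth := hp.mul_le_of_gap_nonneg hα x ih
    have ht : 0 ≤ α * ((x + 1 : ℕ) + 1 : ℝ) := by positivity
    -- `(1 + t)(1 + αd) = (1 + t + αd) + tαd` with `t = α(x + 2)`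
    nlinarith [mul_nonneg (mul_nonneg ht hαd) (hpos (x + 1))]

theorem mul_le_add_two (hp : SolvesRecursion α d p) (hα : 0 ≤ α) (hd : 0 ≤ d)
    (h1 : p 1 = (1 + α * d) * p 0) (hpos : ∀ x, 0 ≤ p x) (x : ℕ) :
    (1 + α * d) * p (x + 1) ≤ p (x + 2) :=
  hp.mul_le_of_gap_nonneg hα x (hp.gap_nonneg hα hd h1 hpos x)

theorem eq_zero_of_first_two_eq_zero (hp : SolvesRecursion α d p) (h0 : p 0 = 0)
    (h1 : p 1 = 0) (x : ℕ) : p x = 0 := by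
  induction x using Nat.twoStepInduction with
  | zero => exact h0
  | one => exact h1
  | more x ih₀ ih₁ => rw [hp x, ih₀, ih₁]; ring

end SolvesRecursion

/-- If `α > 0`, `d ≥ 1` is an integer, and `(p_x)` is a `[0,1]`-valued sequence with
`p₁ = (1+αd)p₀` and satisfying the second-order recursion
`p_{x+2} = (1+α(x+d+1))·(p_{x+1} − (α(x+1)/(1+α(x+1)))·p_x)` for all `x ≥ 0`,
then `p_x = 0` for all `x`. -/
theorem stmt1 (α : ℝ) (hα : 0 < α) (d : ℕ) (hd : 1 ≤ d) (p : ℕ → ℝ)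
    (hp : ∀ x : ℕ, 0 ≤ p x ∧ p x ≤ 1)
    (h1 : p 1 = (1 + α * (d : ℝ)) * p 0)
    (hrec : ∀ x : ℕ, p (x + 2) =
      (1 + α * ((x : ℝ) + (d : ℝ) + 1)) *
        (p (x + 1) - (α * ((x : ℝ) + 1) / (1 + α * ((x : ℝ) + 1))) * p x)) :
    ∀ x : ℕ, p x = 0 := by
  have hsol : SolvesRecursion α d p := hrec
  have hpos : ∀ x, 0 ≤ p x := fun x => (hp x).1
  have hαd : 0 < α * d := mul_pos hα (by exact_mod_cast hd)
  have hp1 : p 1 = 0 :=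
    le_antisymm
      (nonpos_of_geom_le_of_bddAbove (v := fun n => p (n + 1)) (by linarith)
        (hsol.mul_le_add_two hα.le d.cast_nonneg h1 hpos) (fun n => (hp (n + 1)).2))
      (hpos 1)
  have hp0 : p 0 = 0 := by nlinarith [hpos 0]
  exact hsol.eq_zero_of_first_two_eq_zero hp0 hp1
end

section
/- Let d ∈ ℤ \ {0} and let (x₀,y₀) ∈ ℕ² with x₀ − y₀ = d. Then the two-point motion of the birth-death chain exits the level set I_d = {(x,y) ∈ ℕ² : x − y = d} ℙ-almost surely in finite time; that is, ℙ({q ∈ Q₊ : φⁿ_q(x₀) − φⁿ_q(y₀) = d for all n ≥ 0}) = 0. -/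
open MeasureTheory ProbabilityTheory Filter

/-- The birth-death transition map. -/
noncomputable def bdStep (γ₁ γ₂ : ℝ) (q : ℝ) (x : ℕ) : ℕ :=
  if q < γ₁ / (γ₁ + γ₂ * x) then x + 1 else x - 1

/-- The cocycle of the embedded birth-death chain. -/
noncomputable def bdCocycle (γ₁ γ₂ : ℝ) (q : ℕ → ℝ) : ℕ → ℕ → ℕ
  | 0, x => x
  | n + 1, x => bdStep γ₁ γ₂ (q n) (bdCocycle γ₁ γ₂ q n x)

/-!
Write the two starting points as `y + D` and `y` with `D > 0`, and let `T z = γ₁ / (γ₁ + γ₂ z)`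
be the probability of a birth at `z`. From positions `z + D` and `z`, the gap is destroyed in
one step exactly when the fresh noise falls in `[T (z + D), T z)`. This noise is independent
of the past, so each time the lower trajectory is below a level `Y`, the gap dies with
probability at least some `ε > 0`. Telescoping gives
`∑ₙ P(gap kept up to n, lower trajectory below Y at time n) ≤ 1 / ε`, so by Borel–Cantelli
almost surely only finitely many such times occur while the gap survives. Choosing `Y` with
`T Y < 1 / 2`, the lower trajectory above `Y` is dominated by a random walk with negative drift.
By the strong law of large numbers, it therefore returns below `Y` infinitely often.
-/

open Set Topology

noncomputable def bdThreshold (γ₁ γ₂ : ℝ) (x : ℕ) : ℝ := γ₁ / (γ₁ + γ₂ * x)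

section Threshold

variable {γ₁ γ₂ : ℝ}

lemma bdThreshold_pos (hγ₁ : 0 < γ₁) (hγ₂ : 0 ≤ γ₂) (x : ℕ) : 0 < bdThreshold γ₁ γ₂ x := by
  unfold bdThreshold; positivity

lemma bdThreshold_le_one (hγ₁ : 0 ≤ γ₁) (hγ₂ : 0 ≤ γ₂) (x : ℕ) : bdThreshold γ₁ γ₂ x ≤ 1 :=
  div_le_one_of_le₀ (le_add_of_nonneg_right (by positivity)) (by positivity)

lemma bdThreshold_antitone (hγ₁ : 0 < γ₁) (hγ₂ : 0 ≤ γ₂) : Antitone (bdThreshold γ₁ γ₂) :=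
  fun x y hxy => by unfold bdThreshold; gcongr

lemma bdThreshold_strictAnti (hγ₁ : 0 < γ₁) (hγ₂ : 0 < γ₂) : StrictAnti (bdThreshold γ₁ γ₂) :=
  fun x y hxy => by unfold bdThreshold; gcongr

lemma exists_bdThreshold_lt_half (hγ₁ : 0 < γ₁) (hγ₂ : 0 < γ₂) :
    ∃ Y : ℕ, 1 ≤ Y ∧ bdThreshold γ₁ γ₂ Y < 1 / 2 := by
  obtain ⟨Y, hY⟩ := exists_nat_gt (γ₁ / γ₂)
  have hγY : γ₁ < γ₂ * Y := (div_lt_iff₀' hγ₂).1 hY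
  refine ⟨Y, Nat.one_le_iff_ne_zero.2 ?_, ?_⟩
  · rintro rfl
    simp only [CharP.cast_eq_zero, mul_zero] at hγY
    linarith
  · rw [bdThreshold, div_lt_iff₀ (by positivity)]
    linarith

end Threshold

section Step

variable {γ₁ γ₂ : ℝ}

lemma bdStep_def (r : ℝ) (x : ℕ) :
    bdStep γ₁ γ₂ r x = if r < bdThreshold γ₁ γ₂ x then x + 1 else x - 1 := rfl

lemma bdStep_le_succ (r : ℝ) (x : ℕ) : bdStep γ₁ γ₂ r x ≤ x + 1 := by
  rw [bdStep_def]; split <;> omega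

lemma bdStep_of_bdThreshold_le {r : ℝ} {x : ℕ} (h : bdThreshold γ₁ γ₂ x ≤ r) :
    bdStep γ₁ γ₂ r x = x - 1 := by
  rw [bdStep_def, if_neg h.not_gt]

lemma bdStep_add_ne {r : ℝ} {x D : ℕ} (hD : 0 < D)
    (hr : r ∈ Ico (bdThreshold γ₁ γ₂ (x + D)) (bdThreshold γ₁ γ₂ x)) :
    bdStep γ₁ γ₂ r (x + D) ≠ bdStep γ₁ γ₂ r x + D := by
  rw [bdStep_def, bdStep_def, if_neg hr.1.not_gt, if_pos hr.2]
  omega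

lemma bdStep_le_add_indicator (hγ₁ : 0 < γ₁) (hγ₂ : 0 ≤ γ₂) {Y x : ℕ} (hY : 1 ≤ Y) (hx : Y ≤ x)
    (r : ℝ) :
    (bdStep γ₁ γ₂ r x : ℝ) ≤ x + (2 * (Iio (bdThreshold γ₁ γ₂ Y)).indicator 1 r - 1) := by
  by_cases hr : r < bdThreshold γ₁ γ₂ Y
  · rw [indicator_of_mem (show r ∈ Iio _ from hr), Pi.one_apply]
    norm_num
    exact_mod_cast bdStep_le_succ r x
  · rw [indicator_of_notMem (show r ∉ Iio _ from hr), bdStep_of_bdThreshold_le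
      ((bdThreshold_antitone hγ₁ hγ₂ hx).trans (not_lt.1 hr)), Nat.cast_sub (hY.trans hx)]
    norm_num

lemma measurable_bdStep : Measurable (fun p : ℝ × ℕ => bdStep γ₁ γ₂ p.1 p.2) :=
  measurable_from_prod_countable_left fun _ => by
    simp only [bdStep]
    exact Measurable.ite measurableSet_Iio measurable_const measurable_const

end Step

lemma bdCocycle_succ {γ₁ γ₂ : ℝ} (q : ℕ → ℝ) (n x : ℕ) :
    bdCocycle γ₁ γ₂ q (n + 1) x = bdStep γ₁ γ₂ (q n) (bdCocycle γ₁ γ₂ q n x) := rfl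

abbrev noiseBefore (n : ℕ) : MeasurableSpace (ℕ → ℝ) :=
  ⨆ i ∈ Iio n, MeasurableSpace.comap (fun q : ℕ → ℝ => q i) inferInstance

lemma noiseBefore_le (n : ℕ) : noiseBefore n ≤ MeasurableSpace.pi :=
  iSup₂_le fun i _ => (measurable_pi_apply i).comap_le

lemma measurable_apply_noiseBefore {i n : ℕ} (hi : i < n) :
    Measurable[noiseBefore n] (fun q : ℕ → ℝ => q i) :=
  Measurable.of_comap_le <| le_iSup₂_of_le i hi le_rfl

lemma measurable_bdCocycle_noiseBefore {γ₁ γ₂ : ℝ} {k n : ℕ} (hk : k ≤ n) (x : ℕ) :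
    Measurable[noiseBefore n] (fun q => bdCocycle γ₁ γ₂ q k x) := by
  induction k with
  | zero => exact measurable_const
  | succ k ih =>
    exact measurable_bdStep.comp ((measurable_apply_noiseBefore hk).prodMk (ih (by omega)))

lemma indep_noiseBefore {P : Measure (ℕ → ℝ)} (hIndep : iIndepFun (fun n (q : ℕ → ℝ) => q n) P)
    (n : ℕ) :
    Indep (noiseBefore n) (MeasurableSpace.comap (fun q : ℕ → ℝ => q n) inferInstance) P :=
  indep_of_indep_of_le_right
    (indep_iSup_of_disjoint (fun i => (measurable_pi_apply i).comap_le)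
      ((iIndepFun_iff_iIndep _ _ _).1 hIndep) (S := Iio n) (T := {n}) (by simp))
    (le_iSup₂_of_le n rfl le_rfl)

section UniformNoise

variable {P : Measure (ℕ → ℝ)}
  (hUnif : ∀ n : ℕ, P.map (fun q => q n) = volume.restrict (Icc (0 : ℝ) 1))
include hUnif

lemma measure_apply_mem_Ico (n : ℕ) {a b : ℝ} (ha : 0 ≤ a) (hb : b ≤ 1) :
    P {q | q n ∈ Ico a b} = ENNReal.ofReal (b - a) := by
  change P ((fun q => q n) ⁻¹' Ico a b) = _
  rw [← Measure.map_apply (measurable_pi_apply n) measurableSet_Ico, hUnif n,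
    Measure.restrict_apply measurableSet_Ico,
    inter_eq_left.2 (Ico_subset_Icc_self.trans (Icc_subset_Icc ha hb)), Real.volume_Ico]

lemma integral_indicator_Iio_apply (n : ℕ) {c : ℝ} (hc₀ : 0 ≤ c) (hc₁ : c ≤ 1) :
    ∫ q, (Iio c).indicator 1 (q n) ∂P = c := by
  have hIco : Iio c ∩ Icc 0 1 = Ico 0 c := by
    ext r
    simp only [mem_inter_iff, mem_Iio, mem_Icc, mem_Ico]
    grind
  rw [← integral_map (measurable_pi_apply n).aemeasurable
      (measurable_one.indicator measurableSet_Iio).aestronglyMeasurable,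
    hUnif n, integral_indicator_one measurableSet_Iio, measureReal_restrict_apply measurableSet_Iio,
    hIco, Real.volume_real_Ico_of_le hc₀, sub_zero]

variable (hIndep : iIndepFun (fun n (q : ℕ → ℝ) => q n) P)
include hIndep

lemma measure_inter_apply_mem_Ico {n : ℕ} {E : Set (ℕ → ℝ)} (hE : MeasurableSet[noiseBefore n] E)
    {a b : ℝ} (ha : 0 ≤ a) (hb : b ≤ 1) :
    P (E ∩ {q | q n ∈ Ico a b}) = P E * ENNReal.ofReal (b - a) := by
  rw [← measure_apply_mem_Ico hUnif n ha hb]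
  exact (Indep_iff _ _ _).1 (indep_noiseBefore hIndep n) _ _ hE
    ⟨Ico a b, measurableSet_Ico, rfl⟩

lemma ae_tendsto_average_indicator_Iio [IsProbabilityMeasure P] {c : ℝ} (hc₀ : 0 ≤ c)
    (hc₁ : c ≤ 1) :
    ∀ᵐ q ∂P, Tendsto (fun n : ℕ => (n : ℝ)⁻¹ * ∑ i ∈ Finset.range n, (Iio c).indicator 1 (q i))
      atTop (𝓝 c) := by
  have hg : Measurable ((Iio c).indicator (1 : ℝ → ℝ)) :=
    measurable_one.indicator measurableSet_Iio
  have hident (i : ℕ) : IdentDistrib (fun q : ℕ → ℝ => q i) (fun q => q 0) P P :=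
    ⟨(measurable_pi_apply i).aemeasurable, (measurable_pi_apply 0).aemeasurable,
      by rw [hUnif i, hUnif 0]⟩
  have hint : Integrable (fun q : ℕ → ℝ => (Iio c).indicator (1 : ℝ → ℝ) (q 0)) P := by
    refine .of_bound (hg.comp (measurable_pi_apply 0)).aestronglyMeasurable 1 (ae_of_all _ ?_)
    intro q
    simp only [Set.indicator, Pi.one_apply]
    split <;> norm_num
  have h := strong_law_ae (fun i (q : ℕ → ℝ) => (Iio c).indicator (1 : ℝ → ℝ) (q i)) hint
    (fun i j hij => (hIndep.indepFun hij).comp hg hg) (fun i => (hident i).comp hg)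
  rw [integral_indicator_Iio_apply hUnif 0 hc₀ hc₁] at h
  simpa only [smul_eq_mul] using h

end UniformNoise

lemma tendsto_atBot_of_tendsto_average {S : ℕ → ℝ} {c : ℝ} (hc : c < 0)
    (h : Tendsto (fun n : ℕ => (n : ℝ)⁻¹ * S n) atTop (𝓝 c)) : Tendsto S atTop atBot :=
  (tendsto_natCast_atTop_atTop.atTop_mul_neg hc h).congr' <|
    (eventually_ne_atTop 0).mono fun n hn => by field_simp

lemma frequently_lt_of_le_add {x : ℕ → ℕ} {s : ℕ → ℝ} {Y : ℕ} {c : ℝ} (hc : c < 0)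
    (hs : Tendsto (fun n : ℕ => (n : ℝ)⁻¹ * ∑ i ∈ Finset.range n, s i) atTop (𝓝 c))
    (hstep : ∀ n, Y ≤ x n → (x (n + 1) : ℝ) ≤ x n + s n) : ∃ᶠ n in atTop, x n < Y := by
  rw [frequently_atTop]
  intro N
  by_contra! hN
  have hx (n : ℕ) (hn : N ≤ n) : (x n : ℝ) ≤ x N + ∑ i ∈ Finset.Ico N n, s i := by
    induction n, hn using Nat.le_induction with
    | base => simp
    | succ n hn ih => rw [Finset.sum_Ico_succ_top hn]; linarith [hstep n (hN n hn)]
  obtain ⟨n, hlt, hn⟩ := ((tendsto_atBot_of_tendsto_average hc hs).eventually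
    (eventually_lt_atBot (∑ i ∈ Finset.range N, s i - x N))).and (eventually_ge_atTop N) |>.exists
  have := hx n hn
  rw [Finset.sum_Ico_eq_sub _ hn] at this
  linarith [Nat.cast_nonneg (α := ℝ) (x n)]

lemma ae_frequently_bdCocycle_lt {γ₁ γ₂ : ℝ} (hγ₁ : 0 < γ₁) (hγ₂ : 0 ≤ γ₂) {P : Measure (ℕ → ℝ)}
    [IsProbabilityMeasure P] (hIndep : iIndepFun (fun n (q : ℕ → ℝ) => q n) P)
    (hUnif : ∀ n : ℕ, P.map (fun q => q n) = volume.restrict (Icc (0 : ℝ) 1))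
    {Y : ℕ} (hY : 1 ≤ Y) (hYhalf : bdThreshold γ₁ γ₂ Y < 1 / 2) (x : ℕ) :
    ∀ᵐ q ∂P, ∃ᶠ n in atTop, bdCocycle γ₁ γ₂ q n x < Y := by
  filter_upwards [ae_tendsto_average_indicator_Iio hUnif hIndep (bdThreshold_pos hγ₁ hγ₂ Y).le
    (bdThreshold_le_one hγ₁.le hγ₂ Y)] with q hq
  refine frequently_lt_of_le_add
    (s := fun i => 2 * (Iio (bdThreshold γ₁ γ₂ Y)).indicator 1 (q i) - 1)
    (c := 2 * bdThreshold γ₁ γ₂ Y - 1) (by linarith) ?_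
    fun n hn => bdStep_le_add_indicator hγ₁ hγ₂ hY hn (q n)
  refine ((hq.const_mul 2).sub_const 1).congr' <| (eventually_ne_atTop 0).mono fun n hn => ?_
  simp only [Finset.sum_sub_distrib, ← Finset.mul_sum, Finset.sum_const, Finset.card_range,
    nsmul_eq_mul, mul_one]
  field_simp

open scoped ENNReal in
lemma ENNReal.tsum_le_of_add_le {a b : ℕ → ℝ≥0∞} (h : ∀ n, a (n + 1) + b n ≤ a n) :
    ∑' n, b n ≤ a 0 := by
  have hpartial (N : ℕ) : ∑ n ∈ Finset.range N, b n + a N ≤ a 0 := by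
    induction N with
    | zero => simp
    | succ N ih =>
      calc ∑ n ∈ Finset.range (N + 1), b n + a (N + 1)
          = ∑ n ∈ Finset.range N, b n + (a (N + 1) + b N) := by rw [Finset.sum_range_succ]; ring
        _ ≤ ∑ n ∈ Finset.range N, b n + a N := by gcongr; exact h N
        _ ≤ a 0 := ih
  rw [ENNReal.tsum_eq_iSup_nat]
  exact iSup_le fun N => le_self_add.trans (hpartial N)

def gapKept (γ₁ γ₂ : ℝ) (y D n : ℕ) : Set (ℕ → ℝ) :=
  {q | ∀ k ≤ n, bdCocycle γ₁ γ₂ q k (y + D) = bdCocycle γ₁ γ₂ q k y + D}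

section GapKept

variable {γ₁ γ₂ : ℝ} {y D : ℕ}

lemma measurableSet_gapKept (n : ℕ) : MeasurableSet[noiseBefore n] (gapKept γ₁ γ₂ y D n) := by
  simp only [gapKept, ofPred_forall]
  exact .iInter fun k => .iInter fun hk => measurableSet_eq_fun
    (measurable_bdCocycle_noiseBefore hk _) ((measurable_bdCocycle_noiseBefore hk _).add_const D)

lemma gapKept_succ_subset (n : ℕ) : gapKept γ₁ γ₂ y D (n + 1) ⊆ gapKept γ₁ γ₂ y D n :=
  fun _ hq k hk => hq k (by omega)

lemma disjoint_gapKept_succ (hD : 0 < D) (n z : ℕ) :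
    Disjoint (gapKept γ₁ γ₂ y D (n + 1)) (gapKept γ₁ γ₂ y D n ∩ {q | bdCocycle γ₁ γ₂ q n y = z} ∩
      {q | q n ∈ Ico (bdThreshold γ₁ γ₂ (z + D)) (bdThreshold γ₁ γ₂ z)}) := by
  refine disjoint_left.2 fun q hq ⟨⟨_, hz⟩, hr⟩ => bdStep_add_ne hD hr ?_
  have h := hq (n + 1) le_rfl
  rwa [bdCocycle_succ, bdCocycle_succ, hq n n.le_succ, hz] at h

variable {P : Measure (ℕ → ℝ)}

lemma measure_gapKept_succ_add_le (hγ₁ : 0 < γ₁) (hγ₂ : 0 ≤ γ₂)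
    (hIndep : iIndepFun (fun n (q : ℕ → ℝ) => q n) P)
    (hUnif : ∀ n : ℕ, P.map (fun q => q n) = volume.restrict (Icc (0 : ℝ) 1))
    (hD : 0 < D) {Y : ℕ} {ε : ℝ}
    (hε : ∀ z < Y, ε ≤ bdThreshold γ₁ γ₂ z - bdThreshold γ₁ γ₂ (z + D)) (n : ℕ) :
    P (gapKept γ₁ γ₂ y D (n + 1)) +
        ENNReal.ofReal ε * P (gapKept γ₁ γ₂ y D n ∩ {q | bdCocycle γ₁ γ₂ q n y < Y}) ≤
      P (gapKept γ₁ γ₂ y D n) := by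
  set A : ℕ → Set (ℕ → ℝ) := fun z => gapKept γ₁ γ₂ y D n ∩ {q | bdCocycle γ₁ γ₂ q n y = z}
  set F : ℕ → Set (ℕ → ℝ) := fun z =>
    A z ∩ {q | q n ∈ Ico (bdThreshold γ₁ γ₂ (z + D)) (bdThreshold γ₁ γ₂ z)}
  have hA (z : ℕ) : MeasurableSet[noiseBefore n] (A z) :=
    (measurableSet_gapKept n).inter
      (measurable_bdCocycle_noiseBefore le_rfl y (measurableSet_singleton z))
  have hF (z : ℕ) : MeasurableSet (F z) :=
    (noiseBefore_le n _ (hA z)).inter (measurable_pi_apply n measurableSet_Ico)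
  have hAdisj : (Finset.range Y : Set ℕ).PairwiseDisjoint A :=
    fun a _ b _ hab => disjoint_left.2 fun q ha hb => hab (ha.2.symm.trans hb.2)
  have hFdisj : (Finset.range Y : Set ℕ).PairwiseDisjoint F :=
    fun a ha b hb hab => (hAdisj ha hb hab).mono inter_subset_left inter_subset_left
  have hsplit :
      gapKept γ₁ γ₂ y D n ∩ {q | bdCocycle γ₁ γ₂ q n y < Y} = ⋃ z ∈ Finset.range Y, A z := by
    ext q; simp [A]
  calc P (gapKept γ₁ γ₂ y D (n + 1)) +
        ENNReal.ofReal ε * P (gapKept γ₁ γ₂ y D n ∩ {q | bdCocycle γ₁ γ₂ q n y < Y})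
      = P (gapKept γ₁ γ₂ y D (n + 1)) + ∑ z ∈ Finset.range Y, ENNReal.ofReal ε * P (A z) := by
        rw [hsplit, measure_biUnion_finset hAdisj fun z _ => noiseBefore_le n _ (hA z),
          Finset.mul_sum]
    _ ≤ P (gapKept γ₁ γ₂ y D (n + 1)) + ∑ z ∈ Finset.range Y, P (F z) := by
        gcongr with z hz
        rw [measure_inter_apply_mem_Ico hUnif hIndep (hA z) (bdThreshold_pos hγ₁ hγ₂ _).le
          (bdThreshold_le_one hγ₁.le hγ₂ _), mul_comm]
        gcongr
        exact hε z (Finset.mem_range.1 hz)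
    _ = P (gapKept γ₁ γ₂ y D (n + 1) ∪ ⋃ z ∈ Finset.range Y, F z) := by
        rw [measure_union (disjoint_iUnion₂_right.2 fun z _ => disjoint_gapKept_succ hD n z)
          (Finset.measurableSet_biUnion _ fun z _ => hF z),
          measure_biUnion_finset hFdisj fun z _ => hF z]
    _ ≤ P (gapKept γ₁ γ₂ y D n) :=
        measure_mono <| union_subset (gapKept_succ_subset n) <|
          iUnion₂_subset fun z _ => inter_subset_left.trans inter_subset_left

end GapKept

lemma measure_gapKept_forever_eq_zero {γ₁ γ₂ : ℝ} (hγ₁ : 0 < γ₁) (hγ₂ : 0 < γ₂)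
    {P : Measure (ℕ → ℝ)} [IsProbabilityMeasure P]
    (hIndep : iIndepFun (fun n (q : ℕ → ℝ) => q n) P)
    (hUnif : ∀ n : ℕ, P.map (fun q => q n) = volume.restrict (Icc (0 : ℝ) 1))
    {D : ℕ} (hD : 0 < D) (y : ℕ) :
    P {q | ∀ n, bdCocycle γ₁ γ₂ q n (y + D) = bdCocycle γ₁ γ₂ q n y + D} = 0 := by
  obtain ⟨Y, hY, hYhalf⟩ := exists_bdThreshold_lt_half hγ₁ hγ₂
  obtain ⟨z₀, -, hz₀⟩ := (Finset.range Y).exists_min_image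
    (fun z => bdThreshold γ₁ γ₂ z - bdThreshold γ₁ γ₂ (z + D)) ⟨0, Finset.mem_range.2 hY⟩
  have hε : 0 < bdThreshold γ₁ γ₂ z₀ - bdThreshold γ₁ γ₂ (z₀ + D) :=
    sub_pos.2 (bdThreshold_strictAnti hγ₁ hγ₂ (by omega))
  have hsum : ∑' n, P (gapKept γ₁ γ₂ y D n ∩ {q | bdCocycle γ₁ γ₂ q n y < Y}) ≠ ⊤ := by
    have h := ENNReal.tsum_le_of_add_le <| measure_gapKept_succ_add_le (y := y) hγ₁ hγ₂.le
      hIndep hUnif hD fun z hz => hz₀ z (Finset.mem_range.2 hz)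
    rw [ENNReal.tsum_mul_left] at h
    exact (ENNReal.lt_top_of_mul_ne_top_right (h.trans_lt (measure_lt_top P _)).ne
      (ENNReal.ofReal_pos.2 hε).ne').ne
  refine measure_eq_zero_iff_ae_notMem.2 ?_
  filter_upwards [ae_eventually_notMem hsum,
    ae_frequently_bdCocycle_lt hγ₁ hγ₂.le hIndep hUnif hY hYhalf y] with q hexit hlow hq
  obtain ⟨n, hlt, hn⟩ := (hlow.and_eventually hexit).exists
  exact hn ⟨fun k _ => hq k, hlt⟩

/-- Lemma (exit from a level set): let `P` be the product of uniform measures on `[0,1]`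
(characterized by independent, uniformly distributed coordinates), `d ≠ 0` an integer and
`(x₀,y₀) ∈ ℕ²` with `x₀ − y₀ = d`. Then the two-point motion of the birth-death chain exits
the level set `I_d = {(x,y) : x − y = d}` almost surely in finite time, i.e. the event that
the difference of the trajectories equals `d` for all times has probability zero. -/
theorem stmt2 (γ₁ γ₂ : ℝ) (hγ₁ : 0 < γ₁) (hγ₂ : 0 < γ₂)
    (P : Measure (ℕ → ℝ)) [IsProbabilityMeasure P]
    (hIndep : iIndepFun (fun n (q : ℕ → ℝ) => q n) P)
    (hUnif : ∀ n : ℕ, P.map (fun q => q n) = volume.restrict (Set.Icc (0 : ℝ) 1))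
    (d : ℤ) (hd : d ≠ 0) (x₀ y₀ : ℕ) (hxy : (x₀ : ℤ) - (y₀ : ℤ) = d) :
    P {q : ℕ → ℝ | ∀ n : ℕ,
      (bdCocycle γ₁ γ₂ q n x₀ : ℤ) - (bdCocycle γ₁ γ₂ q n y₀ : ℤ) = d} = 0 := by
  obtain ⟨y, D, hD, hsub⟩ : ∃ y D : ℕ, 0 < D ∧
      {q : ℕ → ℝ | ∀ n : ℕ, (bdCocycle γ₁ γ₂ q n x₀ : ℤ) - (bdCocycle γ₁ γ₂ q n y₀ : ℤ) = d} ⊆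
        {q | ∀ n, bdCocycle γ₁ γ₂ q n (y + D) = bdCocycle γ₁ γ₂ q n y + D} := by
    rcases hd.lt_or_gt with hneg | hpos
    · obtain rfl : y₀ = x₀ + (-d).toNat := by omega
      exact ⟨x₀, (-d).toNat, by omega, fun q hq n => by have := hq n; omega⟩
    · obtain rfl : x₀ = y₀ + d.toNat := by omega
      exact ⟨y₀, d.toNat, by omega, fun q hq n => by have := hq n; omega⟩
  exact measure_mono_null hsub (measure_gapKept_forever_eq_zero hγ₁ hγ₂ hIndep hUnif hD y)
end

section
/- For every pair of initial states (x₀,y₀) ∈ ℕ², the two-point motion of the birth-death chain reaches the thick diagonal 𝔻 = {(x,y) ∈ ℕ² : |x − y| ≤ 1} almost surely in finite time; that is, for ℙ-a.e. q ∈ Q₊ there exists n ∈ ℕ with |φⁿ_q(x₀) − φⁿ_q(y₀)| ≤ 1. -/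
/-!
Order the starting points so that `x₀ ≤ y₀`. While the gap `Y - X` of the two-point motion is at
least `2`, one step of size `±1` cannot reverse the order, so the only way to stay outside the
thick diagonal is to keep the gap `≥ 2` forever. On that event consider
`V = (1 - C) X + C Y = X + C (Y - X) ≥ 0`. Given the past, a chain at `x` moves by `2 p(x) - 1` in
mean, `p(x) = γ₁ / (γ₁ + γ₂ x)`, so `V` drifts by `(1 - C)(2 p(X) - 1) + C (2 p(Y) - 1)`. For large
`X` we have `p(X) ≤ 1/4`; for the finitely many small `X`, `p(X) - p(Y) ≥ ε > 0`; with `C = 1 / ε`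
the drift is at most `-1/2` in both cases. A nonnegative quantity losing `1/2` in mean at every step
on an event forces that event to be null.
-/

open MeasureTheory ProbabilityTheory Filter

theorem measure_iInter_eq_zero_of_setIntegral_sub_le {Ω : Type*} [MeasurableSpace Ω]
    {μ : Measure Ω} [IsFiniteMeasure μ] {E : ℕ → Set Ω} {V : ℕ → Ω → ℝ} {ε : ℝ}
    (hε : 0 < ε) (hE : Antitone E) (hEm : ∀ n, MeasurableSet (E n))
    (hVi : ∀ n, Integrable (V n) μ) (hV₀ : ∀ n, ∀ ω ∈ E n, 0 ≤ V n ω)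
    (hV₁ : ∀ n, ∀ ω ∈ E n, 0 ≤ V (n + 1) ω)
    (hdrift : ∀ n, ∫ ω in E n, (V (n + 1) ω - V n ω) ∂μ ≤ -ε * μ.real (E n)) :
    μ (⋂ n, E n) = 0 := by
  set I : ℕ → ℝ := fun n => ∫ ω in E n, V n ω ∂μ
  set t := μ.real (⋂ n, E n)
  have hstep : ∀ n, I (n + 1) ≤ I n - ε * t := fun n => calc
    I (n + 1) ≤ ∫ ω in E n, V (n + 1) ω ∂μ :=
        setIntegral_mono_set (hVi _).integrableOn
          ((ae_restrict_iff' (hEm n)).2 (.of_forall (hV₁ n))) (hE n.le_succ).eventuallyLE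
    _ = I n + ∫ ω in E n, (V (n + 1) ω - V n ω) ∂μ := by
        rw [integral_sub (hVi _).integrableOn (hVi _).integrableOn]; ring
    _ ≤ I n - ε * μ.real (E n) := by linarith [hdrift n]
    _ ≤ I n - ε * t := by gcongr; exact measureReal_mono (Set.iInter_subset _ n)
  have hI : ∀ n : ℕ, I n + n * (ε * t) ≤ I 0 := by
    intro n
    induction n with
    | zero => simp
    | succ n ih => push_cast; linarith [hstep n]
  have ht : t = 0 := by
    refine le_antisymm ?_ measureReal_nonneg
    by_contra! ht
    obtain ⟨n, hn⟩ := exists_nat_gt (I 0 / (ε * t))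
    rw [div_lt_iff₀ (by positivity)] at hn
    linarith [hI n, setIntegral_nonneg (μ := μ) (hEm n) (hV₀ n)]
  exact (measureReal_eq_zero_iff).1 ht

namespace BirthDeath

variable {γ₁ γ₂ : ℝ}

noncomputable def upProb (γ₁ γ₂ : ℝ) (x : ℕ) : ℝ := γ₁ / (γ₁ + γ₂ * x)

lemma upProb_zero (hγ₁ : 0 < γ₁) : upProb γ₁ γ₂ 0 = 1 := by
  simp [upProb, hγ₁.ne']

lemma upProb_pos (hγ₁ : 0 < γ₁) (hγ₂ : 0 ≤ γ₂) (x : ℕ) : 0 < upProb γ₁ γ₂ x := by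
  unfold upProb; positivity

lemma upProb_le_one (hγ₁ : 0 < γ₁) (hγ₂ : 0 ≤ γ₂) (x : ℕ) : upProb γ₁ γ₂ x ≤ 1 :=
  div_le_one_of_le₀ (le_add_of_nonneg_right (by positivity)) (by positivity)

lemma upProb_strictAnti (hγ₁ : 0 < γ₁) (hγ₂ : 0 < γ₂) : StrictAnti (upProb γ₁ γ₂) := by
  intro x y hxy
  unfold upProb
  gcongr

lemma upProb_le_quarter (hγ₁ : 0 < γ₁) (hγ₂ : 0 < γ₂) {x : ℕ} (hx : 3 * γ₁ ≤ γ₂ * x) :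
    upProb γ₁ γ₂ x ≤ 1 / 4 := by
  rw [upProb, div_le_div_iff₀ (by positivity) (by norm_num)]
  linarith

/-- `N = ⌈3 γ₁ / γ₂⌉₊` is where `upProb ≤ 1/4` starts; below it, `C = 1 / ε` for the least gap
`ε = upProb x - upProb (x + 2)` with `x ≤ N`. -/
lemma exists_two_point_drift_le (hγ₁ : 0 < γ₁) (hγ₂ : 0 < γ₂) :
    ∃ C : ℝ, 0 ≤ C ∧ ∀ x y : ℕ, x + 2 ≤ y →
      (1 - C) * (2 * upProb γ₁ γ₂ x - 1) + C * (2 * upProb γ₁ γ₂ y - 1) ≤ -(1 / 2) := by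
  set N := ⌈3 * γ₁ / γ₂⌉₊
  obtain ⟨x₁, -, hx₁⟩ := (Finset.range (N + 1)).exists_min_image
    (fun x => upProb γ₁ γ₂ x - upProb γ₁ γ₂ (x + 2)) ⟨0, by simp⟩
  set ε := upProb γ₁ γ₂ x₁ - upProb γ₁ γ₂ (x₁ + 2)
  have hε : 0 < ε := sub_pos.2 (upProb_strictAnti hγ₁ hγ₂ (by omega))
  refine ⟨1 / ε, by positivity, fun x y hxy => ?_⟩
  have hanti := (upProb_strictAnti hγ₁ hγ₂).antitone
  have hxy' : upProb γ₁ γ₂ y ≤ upProb γ₁ γ₂ (x + 2) := hanti hxy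
  have hx1 := upProb_le_one hγ₁ hγ₂.le x
  rcases le_or_gt x N with hxN | hNx
  · have hgap : ε ≤ upProb γ₁ γ₂ x - upProb γ₁ γ₂ y :=
      (hx₁ x (Finset.mem_range.2 (by omega))).trans (by linarith)
    have : 1 ≤ 1 / ε * (upProb γ₁ γ₂ x - upProb γ₁ γ₂ y) := by
      rw [one_div_mul_eq_div, le_div_iff₀ hε]; linarith
    nlinarith
  · have hN : 3 * γ₁ ≤ γ₂ * x := by
      have h := (Nat.le_ceil (3 * γ₁ / γ₂)).trans (Nat.cast_le.2 hNx.le)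
      rw [div_le_iff₀ hγ₂] at h; linarith
    have hx4 := upProb_le_quarter hγ₁ hγ₂ hN
    have : 0 ≤ 1 / ε * (upProb γ₁ γ₂ x - upProb γ₁ γ₂ y) :=
      mul_nonneg (by positivity) (by linarith [hanti (show x ≤ y by omega)])
    nlinarith

lemma bdStep_eq_ite (q : ℝ) (x : ℕ) :
    bdStep γ₁ γ₂ q x = if q < upProb γ₁ γ₂ x then x + 1 else x - 1 := rfl

/-- Since `upProb 0 = 1`, a noise value `q < 1` never pushes the chain against the boundary `0`,
so the truncated subtraction in `bdStep` is harmless. -/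
lemma cast_bdStep (hγ₁ : 0 < γ₁) {q : ℝ} (hq : q < 1) (x : ℕ) :
    (bdStep γ₁ γ₂ q x : ℝ) = x + if q < upProb γ₁ γ₂ x then 1 else -1 := by
  rw [bdStep_eq_ite]
  split_ifs with h
  · push_cast; ring
  · obtain ⟨x, rfl⟩ : ∃ y, x = y + 1 :=
      Nat.exists_eq_succ_of_ne_zero fun hx => h (by rwa [hx, upProb_zero hγ₁])
    push_cast; ring

lemma bdStep_le_bdStep_of_add_two_le (q : ℝ) {x y : ℕ} (h : x + 2 ≤ y) :
    bdStep γ₁ γ₂ q x ≤ bdStep γ₁ γ₂ q y := by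
  simp only [bdStep_eq_ite]; split_ifs <;> omega

lemma bdCocycle_succ (q : ℕ → ℝ) (n x : ℕ) :
    bdCocycle γ₁ γ₂ q (n + 1) x = bdStep γ₁ γ₂ (q n) (bdCocycle γ₁ γ₂ q n x) := rfl

lemma bdCocycle_le (q : ℕ → ℝ) (n x : ℕ) : bdCocycle γ₁ γ₂ q n x ≤ x + n := by
  induction n with
  | zero => rfl
  | succ n ih =>
    have : bdCocycle γ₁ γ₂ q (n + 1) x ≤ bdCocycle γ₁ γ₂ q n x + 1 := by
      rw [bdCocycle_succ, bdStep_eq_ite]; split_ifs <;> omega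
    omega

abbrev pastMeasurableSpace (n : ℕ) : MeasurableSpace (ℕ → ℝ) :=
  ⨆ i ∈ Set.Iio n, MeasurableSpace.comap (fun q : ℕ → ℝ => q i) inferInstance

lemma pastMeasurableSpace_le (n : ℕ) : pastMeasurableSpace n ≤ MeasurableSpace.pi :=
  iSup₂_le fun i _ => (measurable_pi_apply i).comap_le

lemma measurable_apply_past {i n : ℕ} (h : i < n) :
    Measurable[pastMeasurableSpace n] fun q : ℕ → ℝ => q i :=
  Measurable.of_comap_le (le_iSup₂ (f := fun i (_ : i ∈ Set.Iio n) =>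
    MeasurableSpace.comap (fun q : ℕ → ℝ => q i) inferInstance) i h)

lemma measurable_bdCocycle_past {k n : ℕ} (h : k ≤ n) (x : ℕ) :
    Measurable[pastMeasurableSpace n] fun q => bdCocycle γ₁ γ₂ q k x := by
  induction k with
  | zero => exact measurable_const
  | succ k ih =>
    have hk := ih (by omega)
    simp only [bdCocycle_succ, bdStep_eq_ite]
    exact Measurable.ite (measurableSet_lt (measurable_apply_past h)
      ((measurable_from_nat (f := upProb γ₁ γ₂)).comp hk)) (hk.add_const 1) (hk.sub_const 1)

lemma measurable_bdCocycle (n x : ℕ) : Measurable fun q => bdCocycle γ₁ γ₂ q n x :=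
  Measurable.mono (measurable_bdCocycle_past le_rfl x) (pastMeasurableSpace_le n) le_rfl

section Noise

variable {P : Measure (ℕ → ℝ)}

lemma indep_past_apply (hIndep : iIndepFun (fun n (q : ℕ → ℝ) => q n) P) (n : ℕ) :
    Indep (pastMeasurableSpace n)
      (MeasurableSpace.comap (fun q : ℕ → ℝ => q n) inferInstance) P := by
  have := indep_iSup_of_disjoint (fun i => (measurable_pi_apply i).comap_le)
    ((iIndepFun_iff_iIndep _ _ _).1 hIndep) (S := Set.Iio n) (T := {n}) (by simp)
  rwa [iSup_singleton] at this

lemma measureReal_inter_apply_lt (hIndep : iIndepFun (fun n (q : ℕ → ℝ) => q n) P)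
    (hUnif : ∀ n : ℕ, P.map (fun q => q n) = volume.restrict (Set.Icc (0 : ℝ) 1))
    {n : ℕ} {A : Set (ℕ → ℝ)} (hA : MeasurableSet[pastMeasurableSpace n] A)
    {c : ℝ} (hc₀ : 0 ≤ c) (hc₁ : c ≤ 1) :
    P.real (A ∩ {q | q n < c}) = c * P.real A := by
  change P.real (A ∩ (fun q => q n) ⁻¹' Set.Iio c) = _
  have hlaw : P.real ((fun q => q n) ⁻¹' Set.Iio c) = c := by
    rw [measureReal_def, ← Measure.map_apply (measurable_pi_apply n) measurableSet_Iio, hUnif,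
      Measure.restrict_apply measurableSet_Iio,
      show Set.Iio c ∩ Set.Icc 0 1 = Set.Ico 0 c by ext; simp; grind, Real.volume_Ico, sub_zero,
      ENNReal.toReal_ofReal hc₀]
  rw [measureReal_def, (Indep_iff _ _ P).1 (indep_past_apply hIndep n) _ _ hA
    ⟨Set.Iio c, measurableSet_Iio, rfl⟩, ENNReal.toReal_mul, ← measureReal_def,
    ← measureReal_def, hlaw, mul_comm]

lemma ae_apply_lt_one
    (hUnif : ∀ n : ℕ, P.map (fun q => q n) = volume.restrict (Set.Icc (0 : ℝ) 1)) :
    ∀ᵐ q ∂P, ∀ n, q n < 1 := by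
  refine ae_all_iff.2 fun n => ?_
  have h : ∀ᵐ u ∂P.map (fun q => q n), u < 1 := by
    rw [hUnif, ← Measure.restrict_congr_set Ico_ae_eq_Icc]
    filter_upwards [ae_restrict_mem measurableSet_Ico] with u hu using hu.2
  exact ae_of_ae_map (measurable_pi_apply n).aemeasurable h

variable [IsFiniteMeasure P]

lemma setIntegral_ite_apply_lt (hIndep : iIndepFun (fun n (q : ℕ → ℝ) => q n) P)
    (hUnif : ∀ n : ℕ, P.map (fun q => q n) = volume.restrict (Set.Icc (0 : ℝ) 1))
    {n : ℕ} {A : Set (ℕ → ℝ)} (hA : MeasurableSet[pastMeasurableSpace n] A)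
    {c : ℝ} (hc₀ : 0 ≤ c) (hc₁ : c ≤ 1) :
    ∫ q in A, (if q n < c then (1 : ℝ) else -1) ∂P = (2 * c - 1) * P.real A := by
  set S := {q : ℕ → ℝ | q n < c}
  have hS : MeasurableSet S := measurableSet_lt (measurable_pi_apply n) measurable_const
  have h : ∀ q, (if q n < c then (1 : ℝ) else -1) = 2 * S.indicator 1 q - 1 := by
    intro q; by_cases hq : q n < c <;> simp [S, hq]; norm_num
  simp_rw [h]
  rw [integral_sub (((integrable_indicator_iff hS).2 (integrable_const 1).integrableOn).const_mul 2)
    (integrable_const 1), integral_const_mul, integral_indicator_one hS,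
    measureReal_restrict_apply hS, Set.inter_comm,
    measureReal_inter_apply_lt hIndep hUnif hA hc₀ hc₁, setIntegral_const, smul_eq_mul]
  ring

/-- Freeze the past state `Z` one value at a time and average over the independent `q n`. -/
lemma setIntegral_ite_apply_lt_comp (hIndep : iIndepFun (fun n (q : ℕ → ℝ) => q n) P)
    (hUnif : ∀ n : ℕ, P.map (fun q => q n) = volume.restrict (Set.Icc (0 : ℝ) 1))
    {n : ℕ} {A : Set (ℕ → ℝ)} (hA : MeasurableSet[pastMeasurableSpace n] A)
    {Z : (ℕ → ℝ) → ℕ} (hZ : Measurable[pastMeasurableSpace n] Z)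
    {c : ℕ → ℝ} (hc₀ : ∀ z, 0 ≤ c z) (hc₁ : ∀ z, c z ≤ 1) :
    ∫ q in A, (if q n < c (Z q) then (1 : ℝ) else -1) ∂P = ∫ q in A, (2 * c (Z q) - 1) ∂P := by
  set B : ℕ → Set (ℕ → ℝ) := fun z => A ∩ Z ⁻¹' {z}
  have hB : ∀ z, MeasurableSet[pastMeasurableSpace n] (B z) :=
    fun z => hA.inter (hZ (measurableSet_singleton z))
  have hBm : ∀ z, MeasurableSet (B z) := fun z => pastMeasurableSpace_le n _ (hB z)
  have hBd : Pairwise (Function.onFun Disjoint B) := fun z w hzw =>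
    Set.disjoint_left.2 fun q hz hw => hzw (hz.2.symm.trans hw.2)
  have hA_eq : ⋃ z, B z = A := by ext q; simp [B]
  have hZm : Measurable Z := hZ.mono (pastMeasurableSpace_le n) le_rfl
  have hint_ite : Integrable (fun q => if q n < c (Z q) then (1 : ℝ) else -1) P :=
    .of_bound (Measurable.ite (measurableSet_lt (measurable_pi_apply n)
      ((measurable_from_nat (f := c)).comp hZm)) measurable_const
        measurable_const).aestronglyMeasurable 1 (.of_forall fun q => by split_ifs <;> simp)
  have hint_c : Integrable (fun q => 2 * c (Z q) - 1) P :=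
    .of_bound ((measurable_from_nat (f := fun z => 2 * c z - 1)).comp hZm).aestronglyMeasurable 1
      (.of_forall fun q => by
        rw [Real.norm_eq_abs, abs_le]; constructor <;> linarith [hc₀ (Z q), hc₁ (Z q)])
  rw [← hA_eq, ← (hasSum_integral_iUnion hBm hBd hint_ite.integrableOn).tsum_eq,
    ← (hasSum_integral_iUnion hBm hBd hint_c.integrableOn).tsum_eq]
  congr 1
  ext z
  have hZ_eq : ∀ q ∈ B z, Z q = z := fun q hq => hq.2
  calc ∫ q in B z, (if q n < c (Z q) then (1 : ℝ) else -1) ∂P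
      = ∫ q in B z, (if q n < c z then (1 : ℝ) else -1) ∂P :=
        setIntegral_congr_fun (hBm z) fun q hq => by rw [hZ_eq q hq]
    _ = (2 * c z - 1) * P.real (B z) :=
        setIntegral_ite_apply_lt hIndep hUnif (hB z) (hc₀ z) (hc₁ z)
    _ = ∫ _ in B z, (2 * c z - 1) ∂P := by rw [setIntegral_const, smul_eq_mul, mul_comm]
    _ = ∫ q in B z, (2 * c (Z q) - 1) ∂P :=
        setIntegral_congr_fun (hBm z) fun q hq => by rw [hZ_eq q hq]

lemma integrable_comp_bdCocycle (g : ℕ → ℝ) (n x : ℕ) :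
    Integrable (fun q => g (bdCocycle γ₁ γ₂ q n x)) P :=
  .of_bound ((measurable_from_nat (f := g)).comp (measurable_bdCocycle n x)).aestronglyMeasurable
    (∑ k ∈ Finset.range (x + n + 1), ‖g k‖) (.of_forall fun q =>
      Finset.single_le_sum (f := fun k => ‖g k‖) (fun _ _ => norm_nonneg _)
        (Finset.mem_range.2 (Nat.lt_succ_of_le (bdCocycle_le q n x))))

lemma setIntegral_bdCocycle_succ_sub (hγ₁ : 0 < γ₁) (hγ₂ : 0 ≤ γ₂)
    (hIndep : iIndepFun (fun n (q : ℕ → ℝ) => q n) P)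
    (hUnif : ∀ n : ℕ, P.map (fun q => q n) = volume.restrict (Set.Icc (0 : ℝ) 1))
    {n : ℕ} {A : Set (ℕ → ℝ)} (hA : MeasurableSet[pastMeasurableSpace n] A) (x : ℕ) :
    ∫ q in A, ((bdCocycle γ₁ γ₂ q (n + 1) x : ℝ) - bdCocycle γ₁ γ₂ q n x) ∂P =
      ∫ q in A, (2 * upProb γ₁ γ₂ (bdCocycle γ₁ γ₂ q n x) - 1) ∂P := by
  rw [← setIntegral_ite_apply_lt_comp hIndep hUnif hA (measurable_bdCocycle_past le_rfl x)
    (fun z => (upProb_pos hγ₁ hγ₂ z).le) (upProb_le_one hγ₁ hγ₂)]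
  refine setIntegral_congr_ae (pastMeasurableSpace_le n _ hA) ?_
  filter_upwards [ae_apply_lt_one hUnif] with q hq _
  rw [bdCocycle_succ, cast_bdStep hγ₁ (hq n)]
  ring

def staysApart (γ₁ γ₂ : ℝ) (x₀ y₀ n : ℕ) : Set (ℕ → ℝ) :=
  {q | ∀ k ≤ n, bdCocycle γ₁ γ₂ q k x₀ + 2 ≤ bdCocycle γ₁ γ₂ q k y₀}

lemma staysApart_antitone (x₀ y₀ : ℕ) : Antitone (staysApart γ₁ γ₂ x₀ y₀) :=
  fun _ _ hmn _ hq k hk => hq k (hk.trans hmn)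

lemma measurableSet_staysApart_past (x₀ y₀ n : ℕ) :
    MeasurableSet[pastMeasurableSpace n] (staysApart γ₁ γ₂ x₀ y₀ n) := by
  simp only [staysApart, Set.ofPred_forall]
  exact .iInter fun k => .iInter fun hk =>
    ((measurable_bdCocycle_past hk x₀).prodMk (measurable_bdCocycle_past hk y₀))
      (.of_discrete (s := {p : ℕ × ℕ | p.1 + 2 ≤ p.2}))

noncomputable def lyapunov (γ₁ γ₂ C : ℝ) (x₀ y₀ n : ℕ) (q : ℕ → ℝ) : ℝ :=
  (1 - C) * bdCocycle γ₁ γ₂ q n x₀ + C * bdCocycle γ₁ γ₂ q n y₀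

lemma lyapunov_nonneg {C : ℝ} (hC : 0 ≤ C) {x₀ y₀ n : ℕ} {q : ℕ → ℝ}
    (h : bdCocycle γ₁ γ₂ q n x₀ ≤ bdCocycle γ₁ γ₂ q n y₀) : 0 ≤ lyapunov γ₁ γ₂ C x₀ y₀ n q := by
  have h' : (bdCocycle γ₁ γ₂ q n x₀ : ℝ) ≤ bdCocycle γ₁ γ₂ q n y₀ := by exact_mod_cast h
  calc 0 ≤ (bdCocycle γ₁ γ₂ q n x₀ : ℝ)
        + C * ((bdCocycle γ₁ γ₂ q n y₀ : ℝ) - bdCocycle γ₁ γ₂ q n x₀) :=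
        add_nonneg (Nat.cast_nonneg _) (mul_nonneg hC (sub_nonneg.2 h'))
    _ = lyapunov γ₁ γ₂ C x₀ y₀ n q := by rw [lyapunov]; ring

lemma setIntegral_lyapunov_sub_le (hγ₁ : 0 < γ₁) (hγ₂ : 0 ≤ γ₂)
    (hIndep : iIndepFun (fun n (q : ℕ → ℝ) => q n) P)
    (hUnif : ∀ n : ℕ, P.map (fun q => q n) = volume.restrict (Set.Icc (0 : ℝ) 1))
    {C : ℝ} (hC : ∀ x y : ℕ, x + 2 ≤ y →
      (1 - C) * (2 * upProb γ₁ γ₂ x - 1) + C * (2 * upProb γ₁ γ₂ y - 1) ≤ -(1 / 2))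
    (x₀ y₀ n : ℕ) :
    ∫ q in staysApart γ₁ γ₂ x₀ y₀ n,
        (lyapunov γ₁ γ₂ C x₀ y₀ (n + 1) q - lyapunov γ₁ γ₂ C x₀ y₀ n q) ∂P ≤
      -(1 / 2) * P.real (staysApart γ₁ γ₂ x₀ y₀ n) := by
  set A := staysApart γ₁ γ₂ x₀ y₀ n
  have hA := measurableSet_staysApart_past (γ₁ := γ₁) (γ₂ := γ₂) x₀ y₀ n
  set X : ℕ → (ℕ → ℝ) → ℕ := fun k q => bdCocycle γ₁ γ₂ q k x₀
  set Y : ℕ → (ℕ → ℝ) → ℕ := fun k q => bdCocycle γ₁ γ₂ q k y₀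
  have hΔ : ∀ x, IntegrableOn
      (fun q => (bdCocycle γ₁ γ₂ q (n + 1) x : ℝ) - bdCocycle γ₁ γ₂ q n x) A P := fun x =>
    ((integrable_comp_bdCocycle Nat.cast (n + 1) x).sub
      (integrable_comp_bdCocycle Nat.cast n x)).integrableOn
  have hdrift : ∀ x, IntegrableOn
      (fun q => 2 * upProb γ₁ γ₂ (bdCocycle γ₁ γ₂ q n x) - 1) A P := fun x =>
    (integrable_comp_bdCocycle (fun k => 2 * upProb γ₁ γ₂ k - 1) n x).integrableOn
  calc ∫ q in A, (lyapunov γ₁ γ₂ C x₀ y₀ (n + 1) q - lyapunov γ₁ γ₂ C x₀ y₀ n q) ∂P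
      = (1 - C) * ∫ q in A, ((X (n + 1) q : ℝ) - X n q) ∂P
          + C * ∫ q in A, ((Y (n + 1) q : ℝ) - Y n q) ∂P := by
        rw [← integral_const_mul, ← integral_const_mul,
          ← integral_add ((hΔ x₀).const_mul _) ((hΔ y₀).const_mul _)]
        congr 1; ext q; simp only [lyapunov]; ring
    _ = (1 - C) * ∫ q in A, (2 * upProb γ₁ γ₂ (X n q) - 1) ∂P
          + C * ∫ q in A, (2 * upProb γ₁ γ₂ (Y n q) - 1) ∂P := by
        rw [setIntegral_bdCocycle_succ_sub hγ₁ hγ₂ hIndep hUnif hA,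
          setIntegral_bdCocycle_succ_sub hγ₁ hγ₂ hIndep hUnif hA]
    _ = ∫ q in A,
          ((1 - C) * (2 * upProb γ₁ γ₂ (X n q) - 1) + C * (2 * upProb γ₁ γ₂ (Y n q) - 1)) ∂P := by
        rw [← integral_const_mul, ← integral_const_mul,
          ← integral_add ((hdrift x₀).const_mul _) ((hdrift y₀).const_mul _)]
    _ ≤ ∫ _ in A, -(1 / 2) ∂P :=
        setIntegral_mono_on (((hdrift x₀).const_mul _).add ((hdrift y₀).const_mul _))
          (integrable_const _).integrableOn
          (pastMeasurableSpace_le n _ hA) fun q hq => hC _ _ (hq n le_rfl)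
    _ = -(1 / 2) * P.real A := by rw [setIntegral_const, smul_eq_mul, mul_comm]

lemma measure_iInter_staysApart_eq_zero (hγ₁ : 0 < γ₁) (hγ₂ : 0 < γ₂)
    (hIndep : iIndepFun (fun n (q : ℕ → ℝ) => q n) P)
    (hUnif : ∀ n : ℕ, P.map (fun q => q n) = volume.restrict (Set.Icc (0 : ℝ) 1))
    (x₀ y₀ : ℕ) :
    P (⋂ n, staysApart γ₁ γ₂ x₀ y₀ n) = 0 := by
  obtain ⟨C, hC₀, hC⟩ := exists_two_point_drift_le hγ₁ hγ₂
  exact measure_iInter_eq_zero_of_setIntegral_sub_le (by norm_num : (0 : ℝ) < 1 / 2)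
    (staysApart_antitone x₀ y₀)
    (fun n => pastMeasurableSpace_le n _ (measurableSet_staysApart_past x₀ y₀ n))
    (fun n => ((integrable_comp_bdCocycle (fun k => (1 - C) * k) n x₀).add
      (integrable_comp_bdCocycle (fun k => C * k) n y₀)))
    (fun n q hq => lyapunov_nonneg hC₀ (by have := hq n le_rfl; omega))
    (fun n q hq => lyapunov_nonneg hC₀ (bdStep_le_bdStep_of_add_two_le _ (hq n le_rfl)))
    (setIntegral_lyapunov_sub_le hγ₁ hγ₂.le hIndep hUnif hC x₀ y₀)

lemma forall_mem_staysApart {x₀ y₀ : ℕ} {q : ℕ → ℝ} (hxy : x₀ ≤ y₀)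
    (hfar : ∀ n, 1 < |(bdCocycle γ₁ γ₂ q n x₀ : ℤ) - bdCocycle γ₁ γ₂ q n y₀|) (n : ℕ) :
    q ∈ staysApart γ₁ γ₂ x₀ y₀ n := by
  have add_two_le : ∀ {a b : ℕ}, a ≤ b → 1 < |(a : ℤ) - b| → a + 2 ≤ b := by
    intro a b hab h; rw [lt_abs] at h; omega
  have hgap : ∀ k, bdCocycle γ₁ γ₂ q k x₀ + 2 ≤ bdCocycle γ₁ γ₂ q k y₀ := by
    intro k
    induction k with
    | zero => exact add_two_le hxy (hfar 0)
    | succ k ih => exact add_two_le (bdStep_le_bdStep_of_add_two_le _ ih) (hfar (k + 1))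
  exact fun k _ => hgap k

end Noise

end BirthDeath

/-- For every pair of initial states `(x₀,y₀)`, the two-point motion of the birth-death chain
driven by iid uniform noise on `[0,1]` reaches the thick diagonal
`𝔻 = {(x,y) : |x − y| ≤ 1}` almost surely in finite time. -/
theorem stmt3 (γ₁ γ₂ : ℝ) (hγ₁ : 0 < γ₁) (hγ₂ : 0 < γ₂)
    (P : Measure (ℕ → ℝ)) [IsProbabilityMeasure P]
    (hIndep : iIndepFun (fun n (q : ℕ → ℝ) => q n) P)
    (hUnif : ∀ n : ℕ, P.map (fun q => q n) = volume.restrict (Set.Icc (0 : ℝ) 1))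
    (x₀ y₀ : ℕ) :
    ∀ᵐ q ∂P, ∃ n : ℕ,
      |(bdCocycle γ₁ γ₂ q n x₀ : ℤ) - (bdCocycle γ₁ γ₂ q n y₀ : ℤ)| ≤ 1 := by
  wlog hxy : x₀ ≤ y₀ generalizing x₀ y₀
  · filter_upwards [this y₀ x₀ (by omega)] with q ⟨n, hn⟩
    exact ⟨n, by rwa [abs_sub_comm]⟩
  filter_upwards [measure_eq_zero_iff_ae_notMem.1
    (BirthDeath.measure_iInter_staysApart_eq_zero hγ₁ hγ₂ hIndep hUnif x₀ y₀)] with q hq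
  by_contra! hfar
  exact hq (Set.mem_iInter.2 (BirthDeath.forall_mem_staysApart hxy hfar))
end

section
/- Let (θ,φ) be a random dynamical system on X = ℕ^L over a probability space (Q,𝔽,ℙ) with invertible bimeasurable ℙ-preserving θ, and let A : Q → 𝒫(X) be an invariant compact (i.e. nonempty finite) random set. Then the following are equivalent: (I) A is a weak attractor (for every finite B ⊆ X, dist(φⁿ_q(B), A_{θⁿq}) → 0 in probability); (II) A is a forward attractor (for every finite B ⊆ X, dist(φⁿ_q(B), A_{θⁿq}) → 0 ℙ-a.s.); (III) A is a forward point attractor (the a.s. convergence in (II) holds for all singletons B = {x}); (IV) A is a weak point attractor (the convergence in probability in (I) holds for all singletons B = {x}); (V) A weakly attracts random finite sets (for every random finite set K : Q → 𝒫(X), dist(φⁿ_q(K_q), A_{θⁿq}) → 0 in probability). -/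
open MeasureTheory Filter

/-- Euclidean distance on `X = ℕ^L`. -/
noncomputable def euclDist {L : ℕ} (x y : Fin L → ℕ) : ℝ :=
  Real.sqrt (∑ i, ((x i : ℝ) - (y i : ℝ)) ^ 2)

/-- Distance from a point to a set, `dist(x,A) = inf_{a∈A} d(x,a)`. -/
noncomputable def distToSet {L : ℕ} (x : Fin L → ℕ) (A : Set (Fin L → ℕ)) : ℝ :=
  sInf (euclDist x '' A)

/-- Hausdorff semi-distance `dist(B,A) = sup_{x∈B} inf_{a∈A} d(x,a)`. -/
noncomputable def hausSemidist {L : ℕ} (B A : Set (Fin L → ℕ)) : ℝ :=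
  sSup ((fun x => distToSet x A) '' B)

/-!
Distinct points of `ℕ^L` are at distance at least `1`, so the distance from a point (or a finite
set) to a nonempty finite set is either `0` or at least `1`: every mode of convergence to `0`
becomes "eventually inside `A`". Invariance makes `A` absorbing along almost every orbit, so the
events `{φⁿ_q x ∈ A_{θⁿq}}` increase a.s.; if their probabilities tend to `1`, almost every orbit
enters `A` and stays there, which upgrades weak point attraction to forward point attraction.
Finite sets are finite unions of points, and a random finite set lies in a fixed box
`{x | ∀ i, x i ≤ M}` with probability close to `1`, which reduces (V) to (I).
-/

open Set Topology

section Discrete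

variable {L : ℕ}

lemma one_le_euclDist {x y : Fin L → ℕ} (h : x ≠ y) : 1 ≤ euclDist x y := by
  obtain ⟨i, hi⟩ := Function.ne_iff.mp h
  have h_one_le_sq : (1 : ℝ) ≤ ((x i : ℝ) - y i) ^ 2 := by
    rcases Nat.lt_or_gt_of_ne hi with hlt | hlt
    · have : (x i : ℝ) + 1 ≤ y i := by exact_mod_cast hlt
      nlinarith
    · have : (y i : ℝ) + 1 ≤ x i := by exact_mod_cast hlt
      nlinarith
  rw [euclDist, Real.one_le_sqrt]
  exact h_one_le_sq.trans <| Finset.single_le_sum (f := fun j => ((x j : ℝ) - y j) ^ 2)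
    (fun j _ => sq_nonneg _) (Finset.mem_univ i)

lemma distToSet_nonneg (x : Fin L → ℕ) (A : Set (Fin L → ℕ)) : 0 ≤ distToSet x A :=
  Real.sInf_nonneg (by rintro _ ⟨a, _, rfl⟩; exact Real.sqrt_nonneg _)

lemma distToSet_eq_zero_of_mem {x : Fin L → ℕ} {A : Set (Fin L → ℕ)} (hx : x ∈ A) :
    distToSet x A = 0 := by
  refine le_antisymm ?_ (distToSet_nonneg x A)
  calc distToSet x A ≤ euclDist x x :=
        csInf_le ⟨0, by rintro _ ⟨a, _, rfl⟩; exact Real.sqrt_nonneg _⟩ ⟨x, hx, rfl⟩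
    _ = 0 := by simp [euclDist]

lemma distToSet_lt_one_iff {x : Fin L → ℕ} {A : Set (Fin L → ℕ)} (hAne : A.Nonempty)
    (hAfin : A.Finite) : distToSet x A < 1 ↔ x ∈ A := by
  refine ⟨fun h => ?_, fun hx => (distToSet_eq_zero_of_mem hx).trans_lt one_pos⟩
  obtain ⟨a, ha, hxa⟩ : distToSet x A ∈ euclDist x '' A :=
    (hAne.image _).csInf_mem (hAfin.image _)
  by_contra hxA
  exact (one_le_euclDist (ne_of_mem_of_not_mem ha hxA).symm).not_gt (hxa ▸ h)

lemma hausSemidist_eq_zero_of_subset {B A : Set (Fin L → ℕ)} (hBA : B ⊆ A) :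
    hausSemidist B A = 0 := by
  refine le_antisymm (Real.sSup_le ?_ le_rfl)
    (Real.sSup_nonneg (by rintro _ ⟨x, _, rfl⟩; exact distToSet_nonneg _ _))
  rintro _ ⟨x, hx, rfl⟩
  exact (distToSet_eq_zero_of_mem (hBA hx)).le

lemma hausSemidist_lt_one_iff {B A : Set (Fin L → ℕ)} (hB : B.Finite) (hAne : A.Nonempty)
    (hAfin : A.Finite) : hausSemidist B A < 1 ↔ B ⊆ A := by
  refine ⟨fun h x hx => (distToSet_lt_one_iff hAne hAfin).mp ?_,
    fun hBA => (hausSemidist_eq_zero_of_subset hBA).trans_lt one_pos⟩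
  exact (le_csSup (hB.image _).bddAbove (mem_image_of_mem _ hx)).trans_lt h

end Discrete

section Gap

variable {ι : Type*} {l : Filter ι}

lemma tendsto_nhds_zero_iff_eventually_lt_one {f : ι → ℝ} (hf : ∀ i, f i < 1 → f i = 0) :
    Tendsto f l (𝓝 0) ↔ ∀ᶠ i in l, f i < 1 :=
  ⟨fun h => h.eventually_lt_const one_pos,
    fun h => tendsto_const_nhds.congr' (h.mono fun i hi => (hf i hi).symm)⟩

lemma tendsto_measure_le_iff_of_lt_one {Q : Type*} [MeasurableSpace Q] {μ : Measure Q}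
    {f : ι → Q → ℝ} (hf : ∀ i q, f i q < 1 → f i q = 0) :
    (∀ ε : ℝ, 0 < ε → Tendsto (fun i => μ {q | ε ≤ f i q}) l (𝓝 0)) ↔
      Tendsto (fun i => μ {q | ¬ f i q < 1}) l (𝓝 0) := by
  refine ⟨fun h => by simpa only [not_lt] using h 1 one_pos, fun h ε hε => ?_⟩
  refine tendsto_of_tendsto_of_tendsto_of_le_of_le tendsto_const_nhds h (fun _ => zero_le)
    fun i => measure_mono fun q hq hlt => ?_
  exact (hf i q hlt ▸ hε).not_ge hq

end Gap

section Measure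

variable {Q : Type*} [MeasurableSpace Q] {μ : Measure Q}

lemma ae_exists_mem_of_tendsto_measure_compl {C : ℕ → Set Q}
    (h : Tendsto (fun n => μ (C n)ᶜ) atTop (𝓝 0)) : ∀ᵐ q ∂μ, ∃ n, q ∈ C n := by
  have hnull : μ (⋃ n, C n)ᶜ = 0 := le_antisymm
    (ge_of_tendsto' h fun n => measure_mono (compl_subset_compl.mpr (subset_iUnion C n)))
    bot_le
  exact ae_iff.mpr (measure_mono_null (fun q hq => by simpa using hq) hnull)

lemma tendsto_measure_of_ae_eventually_notMem [IsFiniteMeasure μ] {S : ℕ → Set Q}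
    (hS : ∀ n, MeasurableSet (S n)) (h : ∀ᵐ q ∂μ, ∀ᶠ n in atTop, q ∉ S n) :
    Tendsto (fun n => μ (S n)) atTop (𝓝 0) := by
  have hlim := tendsto_lintegral_of_dominated_convergence (μ := μ) (f := 0) 1
    (fun n => measurable_const.indicator (hS n))
    (fun n => ae_of_all _ (indicator_le_self' fun _ _ => zero_le)) (by simp) <| by
      filter_upwards [h] with q hq
      exact tendsto_const_nhds.congr' (hq.mono fun n hn => (indicator_of_notMem hn _).symm)
  simpa [lintegral_indicator (hS _)] using hlim

lemma tendsto_measure_of_subset_union {ι : Type*} {l : Filter ι} {E : ι → Set Q}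
    {U : ℕ → Set Q} {F : ℕ → ι → Set Q} (hsub : ∀ M i, E i ⊆ U M ∪ F M i)
    (hU : Tendsto (fun M => μ (U M)) atTop (𝓝 0))
    (hF : ∀ M, Tendsto (fun i => μ (F M i)) l (𝓝 0)) :
    Tendsto (fun i => μ (E i)) l (𝓝 0) := by
  rw [ENNReal.tendsto_nhds_zero] at hU ⊢
  intro δ hδ
  obtain ⟨M, hM⟩ := (hU (δ / 2) (ENNReal.half_pos hδ.ne')).exists
  filter_upwards [ENNReal.tendsto_nhds_zero.mp (hF M) (δ / 2) (ENNReal.half_pos hδ.ne')] with i hi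
  calc μ (E i) ≤ μ (U M) + μ (F M i) := (measure_mono (hsub M i)).trans (measure_union_le _ _)
    _ ≤ δ / 2 + δ / 2 := add_le_add hM hi
    _ = δ := ENNReal.add_halves δ

end Measure

section RandomSet

variable {Q Y : Type*} [MeasurableSpace Q] [Countable Y] {K : Q → Set Y}

lemma measurableSet_setOf_apply_mem [MeasurableSpace Y] [MeasurableSingletonClass Y]
    (hK : ∀ y, MeasurableSet {q | y ∈ K q}) {u : Q → Y} (hu : Measurable u) :
    MeasurableSet {q | u q ∈ K q} := by
  have hunion : {q | u q ∈ K q} = ⋃ y, u ⁻¹' {y} ∩ {q | y ∈ K q} := by ext q; simp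
  rw [hunion]
  exact .iUnion fun y => (hu (measurableSet_singleton y)).inter (hK y)

lemma measurableSet_setOf_subset (hK : ∀ y, MeasurableSet {q | y ∈ K q}) (S : Set Y) :
    MeasurableSet {q | K q ⊆ S} := by
  have hinter : {q | K q ⊆ S} = ⋂ y ∈ Sᶜ, {q | y ∈ K q}ᶜ := by
    ext q
    simp only [mem_ofPred_eq, mem_iInter, mem_compl_iff]
    exact ⟨fun h y hy hyK => hy (h hyK), fun h y hyK => by_contra fun hy => h y hy hyK⟩
  rw [hinter]
  exact .biInter (to_countable _) fun y _ => (hK y).compl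

lemma measurableSet_setOf_mem_of_measurable_distToSet {L : ℕ} {K : Q → Set (Fin L → ℕ)}
    (hKne : ∀ q, (K q).Nonempty) (hKfin : ∀ q, (K q).Finite)
    (hK : ∀ x, Measurable fun q => distToSet x (K q)) (x : Fin L → ℕ) :
    MeasurableSet {q | x ∈ K q} := by
  simp_rw [← distToSet_lt_one_iff (hKne _) (hKfin _)]
  exact measurableSet_lt (hK x) measurable_const

lemma tendsto_measure_not_subset_Iic {μ : Measure Q} [IsFiniteMeasure μ] {L : ℕ}
    {K : Q → Set (Fin L → ℕ)} (hKfin : ∀ q, (K q).Finite)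
    (hK : ∀ x, MeasurableSet {q | x ∈ K q}) :
    Tendsto (fun M : ℕ => μ {q | ¬ K q ⊆ Iic fun _ => M}) atTop (𝓝 0) := by
  have hanti : Antitone fun M : ℕ => {q | ¬ K q ⊆ Iic fun _ => M} :=
    fun M N hMN q hq hsub => hq (hsub.trans (Iic_subset_Iic.mpr fun _ => hMN))
  have hempty : ⋂ M : ℕ, {q | ¬ K q ⊆ Iic fun _ => M} = ∅ := by
    refine eq_empty_of_forall_notMem fun q hq => ?_
    obtain ⟨b, hb⟩ := (hKfin q).bddAbove
    exact mem_iInter.mp hq (Finset.univ.sup b)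
      fun x hx i => (hb hx i).trans (Finset.le_sup (Finset.mem_univ i))
  have hlim := tendsto_measure_iInter_atTop (μ := μ)
    (s := fun M : ℕ => {q | ¬ K q ⊆ Iic fun _ => M})
    (fun M => (measurableSet_setOf_subset hK _).compl.nullMeasurableSet) hanti
    ⟨0, measure_ne_top μ _⟩
  rwa [hempty, measure_empty] at hlim

end RandomSet

lemma ae_mem_of_mem_of_le {Q X : Type*} [MeasurableSpace Q] {P : Measure Q} {θ : Q → Q}
    {φ : ℕ → Q → X → X} {A : Q → Set X} (hpres : MeasurePreserving θ P P)
    (hφcoc : ∀ (n m : ℕ) (q : Q) (x : X), φ (n + m) q x = φ n (θ^[m] q) (φ m q x))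
    (hAinv : ∀ n : ℕ, ∀ᵐ q ∂P, (φ n q) '' A q = A (θ^[n] q)) :
    ∀ᵐ q ∂P, ∀ x n k, n ≤ k → φ n q x ∈ A (θ^[n] q) → φ k q x ∈ A (θ^[k] q) := by
  -- `θⁿ` preserves `P`, so the a.s. invariance also holds at the fibres over `θⁿ q`.
  have hshifted : ∀ᵐ q ∂P, ∀ n m, (φ m (θ^[n] q)) '' A (θ^[n] q) = A (θ^[m] (θ^[n] q)) :=
    ae_all_iff.mpr fun n => ae_all_iff.mpr fun m =>
      (hpres.iterate n).quasiMeasurePreserving.ae (hAinv m)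
  filter_upwards [hshifted] with q hq x n k hnk hx
  obtain ⟨m, rfl⟩ := Nat.exists_eq_add_of_le' hnk
  rw [hφcoc, Function.iterate_add_apply, ← hq n m]
  exact mem_image_of_mem _ hx

section Attractor

variable {Q : Type*} [MeasurableSpace Q] (P : Measure Q) {L : ℕ} (θ : Q → Q)
  (φ : ℕ → Q → (Fin L → ℕ) → (Fin L → ℕ)) (A : Q → Set (Fin L → ℕ))

def IsWeakAttractor : Prop :=
  ∀ B : Set (Fin L → ℕ), B.Finite → ∀ ε : ℝ, 0 < ε →
    Tendsto (fun n : ℕ => P {q | ε ≤ hausSemidist ((φ n q) '' B) (A (θ^[n] q))}) atTop (𝓝 0)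

def IsForwardAttractor : Prop :=
  ∀ B : Set (Fin L → ℕ), B.Finite →
    ∀ᵐ q ∂P, Tendsto (fun n : ℕ => hausSemidist ((φ n q) '' B) (A (θ^[n] q))) atTop (𝓝 0)

def IsForwardPointAttractor : Prop :=
  ∀ x : Fin L → ℕ,
    ∀ᵐ q ∂P, Tendsto (fun n : ℕ => distToSet (φ n q x) (A (θ^[n] q))) atTop (𝓝 0)

def IsWeakPointAttractor : Prop :=
  ∀ x : Fin L → ℕ, ∀ ε : ℝ, 0 < ε →
    Tendsto (fun n : ℕ => P {q | ε ≤ distToSet (φ n q x) (A (θ^[n] q))}) atTop (𝓝 0)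

def WeaklyAttractsRandomFiniteSets : Prop :=
  ∀ K : Q → Set (Fin L → ℕ), (∀ q, (K q).Nonempty) → (∀ q, (K q).Finite) →
    (∀ x : Fin L → ℕ, Measurable fun q => distToSet x (K q)) →
    ∀ ε : ℝ, 0 < ε →
    Tendsto (fun n : ℕ => P {q | ε ≤ hausSemidist ((φ n q) '' K q) (A (θ^[n] q))}) atTop (𝓝 0)

variable {P θ φ A}

lemma isWeakAttractor_iff (hAne : ∀ q, (A q).Nonempty) (hAfin : ∀ q, (A q).Finite) :
    IsWeakAttractor P θ φ A ↔ ∀ B : Set (Fin L → ℕ), B.Finite →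
      Tendsto (fun n => P {q | ¬ (φ n q) '' B ⊆ A (θ^[n] q)}) atTop (𝓝 0) := by
  refine forall₂_congr fun B hB => ?_
  have hlt := fun n q => hausSemidist_lt_one_iff (hB.image (φ n q)) (hAne (θ^[n] q)) (hAfin _)
  rw [tendsto_measure_le_iff_of_lt_one fun n q h =>
    hausSemidist_eq_zero_of_subset ((hlt n q).mp h)]
  simp_rw [hlt]

lemma isForwardAttractor_iff (hAne : ∀ q, (A q).Nonempty) (hAfin : ∀ q, (A q).Finite) :
    IsForwardAttractor P θ φ A ↔ ∀ B : Set (Fin L → ℕ), B.Finite →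
      ∀ᵐ q ∂P, ∀ᶠ n in atTop, (φ n q) '' B ⊆ A (θ^[n] q) := by
  refine forall₂_congr fun B hB => ?_
  have hlt := fun n q => hausSemidist_lt_one_iff (hB.image (φ n q)) (hAne (θ^[n] q)) (hAfin _)
  refine eventually_congr (.of_forall fun q => ?_)
  rw [tendsto_nhds_zero_iff_eventually_lt_one fun n h =>
    hausSemidist_eq_zero_of_subset ((hlt n q).mp h)]
  simp_rw [hlt]

lemma isForwardPointAttractor_iff (hAne : ∀ q, (A q).Nonempty) (hAfin : ∀ q, (A q).Finite) :
    IsForwardPointAttractor P θ φ A ↔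
      ∀ x : Fin L → ℕ, ∀ᵐ q ∂P, ∀ᶠ n in atTop, φ n q x ∈ A (θ^[n] q) := by
  refine forall_congr' fun x => eventually_congr (.of_forall fun q => ?_)
  have hlt := fun n => distToSet_lt_one_iff (x := φ n q x) (hAne (θ^[n] q)) (hAfin _)
  rw [tendsto_nhds_zero_iff_eventually_lt_one fun n h =>
    distToSet_eq_zero_of_mem ((hlt n).mp h)]
  simp_rw [hlt]

lemma isWeakPointAttractor_iff (hAne : ∀ q, (A q).Nonempty) (hAfin : ∀ q, (A q).Finite) :
    IsWeakPointAttractor P θ φ A ↔ ∀ x : Fin L → ℕ,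
      Tendsto (fun n => P {q | φ n q x ∉ A (θ^[n] q)}) atTop (𝓝 0) := by
  refine forall_congr' fun x => ?_
  have hlt := fun n q => distToSet_lt_one_iff (x := φ n q x) (hAne (θ^[n] q)) (hAfin _)
  rw [tendsto_measure_le_iff_of_lt_one fun n q h => distToSet_eq_zero_of_mem ((hlt n q).mp h)]
  simp_rw [hlt]

lemma weaklyAttractsRandomFiniteSets_iff (hAne : ∀ q, (A q).Nonempty)
    (hAfin : ∀ q, (A q).Finite) :
    WeaklyAttractsRandomFiniteSets P θ φ A ↔ ∀ K : Q → Set (Fin L → ℕ),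
      (∀ q, (K q).Nonempty) → (∀ q, (K q).Finite) →
      (∀ x : Fin L → ℕ, Measurable fun q => distToSet x (K q)) →
      Tendsto (fun n => P {q | ¬ (φ n q) '' K q ⊆ A (θ^[n] q)}) atTop (𝓝 0) := by
  refine forall_congr' fun K => forall_congr' fun _ => forall_congr' fun hKfin =>
    forall_congr' fun _ => ?_
  have hlt := fun n q =>
    hausSemidist_lt_one_iff ((hKfin q).image (φ n q)) (hAne (θ^[n] q)) (hAfin _)
  rw [tendsto_measure_le_iff_of_lt_one fun n q h =>
    hausSemidist_eq_zero_of_subset ((hlt n q).mp h)]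
  simp_rw [hlt]

end Attractor

section Implications

variable {Q : Type*} [MeasurableSpace Q] {P : Measure Q} {L : ℕ} {θ : Q → Q}
  {φ : ℕ → Q → (Fin L → ℕ) → (Fin L → ℕ)} {A : Q → Set (Fin L → ℕ)}

lemma IsWeakAttractor.isWeakPointAttractor (h : IsWeakAttractor P θ φ A) :
    IsWeakPointAttractor P θ φ A := fun x ε hε => by
  simpa [hausSemidist] using h {x} (finite_singleton x) ε hε

lemma IsWeakPointAttractor.isForwardPointAttractor (hpres : MeasurePreserving θ P P)
    (hφcoc : ∀ (n m : ℕ) (q : Q) (x : Fin L → ℕ), φ (n + m) q x = φ n (θ^[m] q) (φ m q x))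
    (hAne : ∀ q, (A q).Nonempty) (hAfin : ∀ q, (A q).Finite)
    (hAinv : ∀ n : ℕ, ∀ᵐ q ∂P, (φ n q) '' A q = A (θ^[n] q))
    (h : IsWeakPointAttractor P θ φ A) : IsForwardPointAttractor P θ φ A := by
  rw [isWeakPointAttractor_iff hAne hAfin] at h
  rw [isForwardPointAttractor_iff hAne hAfin]
  intro x
  have hentered : ∀ᵐ q ∂P, ∃ n, φ n q x ∈ A (θ^[n] q) :=
    ae_exists_mem_of_tendsto_measure_compl (C := fun n => {q | φ n q x ∈ A (θ^[n] q)}) (h x)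
  filter_upwards [hentered, ae_mem_of_mem_of_le hpres hφcoc hAinv] with q ⟨n, hn⟩ habsorb
  exact eventually_atTop.mpr ⟨n, fun k hk => habsorb x n k hk hn⟩

lemma IsForwardPointAttractor.isForwardAttractor (hAne : ∀ q, (A q).Nonempty)
    (hAfin : ∀ q, (A q).Finite) (h : IsForwardPointAttractor P θ φ A) :
    IsForwardAttractor P θ φ A := by
  rw [isForwardPointAttractor_iff hAne hAfin] at h
  rw [isForwardAttractor_iff hAne hAfin]
  intro B hB
  filter_upwards [(ae_ball_iff hB.countable).mpr fun x _ => h x] with q hq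
  filter_upwards [(eventually_all_finite hB).mpr hq] with n hn
  exact image_subset_iff.mpr hn

lemma IsForwardAttractor.isWeakAttractor [IsFiniteMeasure P] (hθ : Measurable θ)
    (hφmeas : ∀ n : ℕ, Measurable fun p : Q × (Fin L → ℕ) => φ n p.1 p.2)
    (hAne : ∀ q, (A q).Nonempty) (hAfin : ∀ q, (A q).Finite)
    (hAmeas : ∀ x : Fin L → ℕ, Measurable fun q => distToSet x (A q))
    (h : IsForwardAttractor P θ φ A) : IsWeakAttractor P θ φ A := by
  rw [isForwardAttractor_iff hAne hAfin] at h
  rw [isWeakAttractor_iff hAne hAfin]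
  intro B hB
  have hAmem := measurableSet_setOf_mem_of_measurable_distToSet hAne hAfin hAmeas
  have hmeas : ∀ n, MeasurableSet {q | (φ n q) '' B ⊆ A (θ^[n] q)} := fun n => by
    have hinter :
        {q | (φ n q) '' B ⊆ A (θ^[n] q)} = ⋂ x ∈ B, {q | φ n q x ∈ A (θ^[n] q)} := by
      ext q
      simp [subset_def]
    rw [hinter]
    refine hB.measurableSet_biInter fun x _ => measurableSet_setOf_apply_mem
      (K := fun q => A (θ^[n] q)) (fun y => hθ.iterate n (hAmem y)) ?_
    exact (hφmeas n).comp measurable_prodMk_right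
  exact tendsto_measure_of_ae_eventually_notMem (fun n => (hmeas n).compl)
    (by simpa using h B hB)

lemma IsWeakAttractor.weaklyAttractsRandomFiniteSets [IsFiniteMeasure P]
    (hAne : ∀ q, (A q).Nonempty) (hAfin : ∀ q, (A q).Finite) (h : IsWeakAttractor P θ φ A) :
    WeaklyAttractsRandomFiniteSets P θ φ A := by
  rw [isWeakAttractor_iff hAne hAfin] at h
  rw [weaklyAttractsRandomFiniteSets_iff hAne hAfin]
  intro K hKne hKfin hKmeas
  refine tendsto_measure_of_subset_union (fun M n q hq => ?_)
    (tendsto_measure_not_subset_Iic hKfin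
      (measurableSet_setOf_mem_of_measurable_distToSet hKne hKfin hKmeas))
    fun M => h (Iic fun _ => M) (finite_Iic _)
  by_cases hKM : K q ⊆ Iic fun _ => M
  · exact Or.inr fun hsub => hq ((image_mono hKM).trans hsub)
  · exact Or.inl hKM

lemma WeaklyAttractsRandomFiniteSets.isWeakAttractor
    (h : WeaklyAttractsRandomFiniteSets P θ φ A) : IsWeakAttractor P θ φ A := by
  intro B hB ε hε
  rcases B.eq_empty_or_nonempty with rfl | hBne
  · simp [hausSemidist, hε.not_ge]
  · exact h (fun _ => B) (fun _ => hBne) (fun _ => hB) (fun _ => measurable_const) ε hε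

end Implications

theorem stmt9_general {Q : Type*} [MeasurableSpace Q] (P : Measure Q) [IsProbabilityMeasure P]
    (L : ℕ)
    (θ : Q → Q) (hθ : Measurable θ)
    (hpres : MeasurePreserving θ P P)
    (φ : ℕ → Q → (Fin L → ℕ) → (Fin L → ℕ))
    (hφmeas : ∀ n : ℕ, Measurable fun p : Q × (Fin L → ℕ) => φ n p.1 p.2)
    (hφcoc : ∀ (n m : ℕ) (q : Q) (x : Fin L → ℕ), φ (n + m) q x = φ n (θ^[m] q) (φ m q x))
    (A : Q → Set (Fin L → ℕ))
    (hAne : ∀ q, (A q).Nonempty) (hAfin : ∀ q, (A q).Finite)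
    (hAmeas : ∀ x : Fin L → ℕ, Measurable fun q => distToSet x (A q))
    (hAinv : ∀ n : ℕ, ∀ᵐ q ∂P, (φ n q) '' A q = A (θ^[n] q)) :
    List.TFAE [
      -- (I) A is a weak attractor
      (∀ B : Set (Fin L → ℕ), B.Finite → ∀ ε : ℝ, 0 < ε →
        Tendsto (fun n : ℕ =>
          P {q | ε ≤ hausSemidist ((φ n q) '' B) (A (θ^[n] q))}) atTop (nhds 0)),
      -- (II) A is a forward attractor
      (∀ B : Set (Fin L → ℕ), B.Finite →
        ∀ᵐ q ∂P, Tendsto (fun n : ℕ =>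
          hausSemidist ((φ n q) '' B) (A (θ^[n] q))) atTop (nhds 0)),
      -- (III) A is a forward point attractor
      (∀ x : Fin L → ℕ,
        ∀ᵐ q ∂P, Tendsto (fun n : ℕ =>
          distToSet (φ n q x) (A (θ^[n] q))) atTop (nhds 0)),
      -- (IV) A is a weak point attractor
      (∀ x : Fin L → ℕ, ∀ ε : ℝ, 0 < ε →
        Tendsto (fun n : ℕ =>
          P {q | ε ≤ distToSet (φ n q x) (A (θ^[n] q))}) atTop (nhds 0)),
      -- (V) A weakly attracts random finite sets
      (∀ K : Q → Set (Fin L → ℕ), (∀ q, (K q).Nonempty) → (∀ q, (K q).Finite) →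
        (∀ x : Fin L → ℕ, Measurable fun q => distToSet x (K q)) →
        ∀ ε : ℝ, 0 < ε →
        Tendsto (fun n : ℕ =>
          P {q | ε ≤ hausSemidist ((φ n q) '' K q) (A (θ^[n] q))}) atTop (nhds 0))
    ] := by
  change List.TFAE [IsWeakAttractor P θ φ A, IsForwardAttractor P θ φ A,
    IsForwardPointAttractor P θ φ A, IsWeakPointAttractor P θ φ A,
    WeaklyAttractsRandomFiniteSets P θ φ A]
  tfae_have 1 → 4 := IsWeakAttractor.isWeakPointAttractor
  tfae_have 4 → 3 := fun h => h.isForwardPointAttractor hpres hφcoc hAne hAfin hAinv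
  tfae_have 3 → 2 := fun h => h.isForwardAttractor hAne hAfin
  tfae_have 2 → 1 := fun h => h.isWeakAttractor hθ hφmeas hAne hAfin hAmeas
  tfae_have 1 → 5 := fun h => h.weaklyAttractsRandomFiniteSets hAne hAfin
  tfae_have 5 → 1 := WeaklyAttractsRandomFiniteSets.isWeakAttractor
  tfae_finish

/-- Equivalent characterizations of attraction for an invariant compact (nonempty finite)
random set `A` of a random dynamical system `(θ,φ)` on `X = ℕ^L` over a probability space,
with invertible bimeasurable measure-preserving `θ`:
(I) weak attractor ↔ (II) forward attractor ↔ (III) forward point attractor ↔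
(IV) weak point attractor ↔ (V) weak attraction of all random finite sets. -/
theorem stmt9 {Q : Type*} [MeasurableSpace Q] (P : Measure Q) [IsProbabilityMeasure P]
    (L : ℕ)
    (θ θinv : Q → Q) (hθ : Measurable θ) (hθinv : Measurable θinv)
    (hleft : Function.LeftInverse θinv θ) (hright : Function.RightInverse θinv θ)
    (hpres : MeasurePreserving θ P P)
    (φ : ℕ → Q → (Fin L → ℕ) → (Fin L → ℕ))
    (hφmeas : ∀ n : ℕ, Measurable fun p : Q × (Fin L → ℕ) => φ n p.1 p.2)
    (hφ0 : ∀ q x, φ 0 q x = x)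
    (hφcoc : ∀ (n m : ℕ) (q : Q) (x : Fin L → ℕ), φ (n + m) q x = φ n (θ^[m] q) (φ m q x))
    (A : Q → Set (Fin L → ℕ))
    (hAne : ∀ q, (A q).Nonempty) (hAfin : ∀ q, (A q).Finite)
    (hAmeas : ∀ x : Fin L → ℕ, Measurable fun q => distToSet x (A q))
    (hAinv : ∀ n : ℕ, ∀ᵐ q ∂P, (φ n q) '' A q = A (θ^[n] q)) :
    List.TFAE [
      -- (I) A is a weak attractor
      (∀ B : Set (Fin L → ℕ), B.Finite → ∀ ε : ℝ, 0 < ε →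
        Tendsto (fun n : ℕ =>
          P {q | ε ≤ hausSemidist ((φ n q) '' B) (A (θ^[n] q))}) atTop (nhds 0)),
      -- (II) A is a forward attractor
      (∀ B : Set (Fin L → ℕ), B.Finite →
        ∀ᵐ q ∂P, Tendsto (fun n : ℕ =>
          hausSemidist ((φ n q) '' B) (A (θ^[n] q))) atTop (nhds 0)),
      -- (III) A is a forward point attractor
      (∀ x : Fin L → ℕ,
        ∀ᵐ q ∂P, Tendsto (fun n : ℕ =>
          distToSet (φ n q x) (A (θ^[n] q))) atTop (nhds 0)),
      -- (IV) A is a weak point attractor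
      (∀ x : Fin L → ℕ, ∀ ε : ℝ, 0 < ε →
        Tendsto (fun n : ℕ =>
          P {q | ε ≤ distToSet (φ n q x) (A (θ^[n] q))}) atTop (nhds 0)),
      -- (V) A weakly attracts random finite sets
      (∀ K : Q → Set (Fin L → ℕ), (∀ q, (K q).Nonempty) → (∀ q, (K q).Finite) →
        (∀ x : Fin L → ℕ, Measurable fun q => distToSet x (K q)) →
        ∀ ε : ℝ, 0 < ε →
        Tendsto (fun n : ℕ =>
          P {q | ε ≤ hausSemidist ((φ n q) '' K q) (A (θ^[n] q))}) atTop (nhds 0))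
    ] :=
  stmt9_general P L θ hθ hpres φ hφmeas hφcoc A hAne hAfin hAmeas hAinv
end
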